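/- arXiv:2605.27645 — 2 statements merged into one kernel-verified Lean document; each statement's English description precedes it below -/
import Mathlib

section
/- For every time T+1 ≤ t ≤ n, the centralized posterior does not depend on the strategy profile: if γ^{(K)} and γ̃^{(K)} are strategy profiles and δ is a shared history with P^{γ^{(K)}}(Δ_t^{(K)} = δ) > 0 and P^{γ̃^{(K)}}(Δ_t^{(K)} = δ) > 0, then P^{γ^{(K)}}(X_{t−T} = x | Δ_t^{(K)} = δ) = P^{γ̃^{(K)}}(X_{t−T} = x | Δ_t^{(K)} = δ) for every x ∈ X. -/
open scoped Classical BigOperators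

noncomputable section

/-! ### Finite-horizon decentralized POMDP with `T`-step delayed sharing.

Time is 0-indexed: `t : Fin n` corresponds to the paper's time `t+1`. -/

/-- Trajectories: states, observations of each agent, actions of each agent. -/
abbrev Traj (n K : ℕ) (X : Type) (Y U : Fin K → Type) : Type :=
  (Fin n → X) × ((s : Fin n) → (j : Fin K) → Y j) × ((s : Fin n) → (j : Fin K) → U j)

/-- Time indices whose data has been shared by time `t` (delay `T`). -/
abbrev SharedIdx (n T : ℕ) (t : Fin n) : Type := {s : Fin n // s.val + T ≤ t.val}

/-- Time indices of the private observations at time `t`. -/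
abbrev PrivYIdx (n T : ℕ) (t : Fin n) : Type :=
  {s : Fin n // t.val < s.val + T ∧ s.val ≤ t.val}

/-- Time indices of the private past actions at time `t`. -/
abbrev PrivUIdx (n T : ℕ) (t : Fin n) : Type :=
  {s : Fin n // t.val < s.val + T ∧ s.val < t.val}

/-- The shared (common) information `Δ_t^{(K)}`. -/
abbrev SharedHist (n T : ℕ) {K : ℕ} (Y U : Fin K → Type) (t : Fin n) : Type :=
  (j : Fin K) → (SharedIdx n T t → Y j) × (SharedIdx n T t → U j)

/-- Agent `k`'s private information `Λ_t^k`. -/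
abbrev PrivHist (n T : ℕ) {K : ℕ} (Y U : Fin K → Type) (t : Fin n) (k : Fin K) : Type :=
  (PrivYIdx n T t → Y k) × (PrivUIdx n T t → U k)

/-- Agent `k`'s information `I_t^k = (Δ_t^{(K)}, Λ_t^k)`. -/
abbrev Info (n T : ℕ) {K : ℕ} (Y U : Fin K → Type) (t : Fin n) (k : Fin K) : Type :=
  SharedHist n T Y U t × PrivHist n T Y U t k

/-- `Λ_t^{-k}`: private information of all agents other than `k`. -/
abbrev PrivOthers (n T : ℕ) {K : ℕ} (Y U : Fin K → Type) (t : Fin n) (k : Fin K) : Type :=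
  (j : {j : Fin K // j ≠ k}) → PrivHist n T Y U t j.val

/-- `Λ_t^{(K)}`: private information of all agents. -/
abbrev PrivAll (n T : ℕ) {K : ℕ} (Y U : Fin K → Type) (t : Fin n) : Type :=
  (j : Fin K) → PrivHist n T Y U t j

def sharedOf {n K : ℕ} {X : Type} {Y U : Fin K → Type} (T : ℕ)
    (ω : Traj n K X Y U) (t : Fin n) : SharedHist n T Y U t :=
  fun j => (fun s => ω.2.1 s.1 j, fun s => ω.2.2 s.1 j)

def privOf {n K : ℕ} {X : Type} {Y U : Fin K → Type} (T : ℕ)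
    (ω : Traj n K X Y U) (t : Fin n) (k : Fin K) : PrivHist n T Y U t k :=
  (fun s => ω.2.1 s.1 k, fun s => ω.2.2 s.1 k)

def infoOf {n K : ℕ} {X : Type} {Y U : Fin K → Type} (T : ℕ)
    (ω : Traj n K X Y U) (t : Fin n) (k : Fin K) : Info n T Y U t k :=
  (sharedOf T ω t, privOf T ω t k)

def privOthersOf {n K : ℕ} {X : Type} {Y U : Fin K → Type} (T : ℕ)
    (ω : Traj n K X Y U) (t : Fin n) (k : Fin K) : PrivOthers n T Y U t k :=
  fun j => privOf T ω t j.val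

def privAllOf {n K : ℕ} {X : Type} {Y U : Fin K → Type} (T : ℕ)
    (ω : Traj n K X Y U) (t : Fin n) : PrivAll n T Y U t :=
  fun j => privOf T ω t j

/-- A strategy of agent `k`: `U_t^k = γ_t^k(I_t^k)`. -/
abbrev Strategy (n T : ℕ) {K : ℕ} (Y U : Fin K → Type) (k : Fin K) : Type :=
  (t : Fin n) → Info n T Y U t k → U k

/-- A strategy profile. -/
abbrev Profile (n T : ℕ) {K : ℕ} (Y U : Fin K → Type) : Type :=
  (k : Fin K) → Strategy n T Y U k

/-- The model: initial distribution, transition kernels, observation kernels,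
and a fixed dummy "previous action" used at time 1. -/
structure Model (n K : ℕ) (X : Type) (Y U : Fin K → Type) where
  S1 : PMF X
  Strans : Fin n → X → ((j : Fin K) → U j) → PMF X
  Q : (t : Fin n) → (j : Fin K) → X → ((j : Fin K) → U j) → PMF (Y j)
  u0 : (j : Fin K) → U j

def tprev {n : ℕ} (t : Fin n) : Fin n :=
  ⟨t.val - 1, lt_of_le_of_lt (Nat.sub_le _ _) t.isLt⟩

def tlast (n : ℕ) [NeZero n] : Fin n :=
  ⟨n - 1, Nat.sub_lt (Nat.pos_of_ne_zero (NeZero.ne n)) Nat.one_pos⟩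

/-- The probability that the profile `γ` assigns to the trajectory `ω` (the
deterministic action maps are enforced by 0/1 indicator factors). -/
def prob {n K : ℕ} [NeZero n] {X : Type} {Y U : Fin K → Type}
    (M : Model n K X Y U) (T : ℕ) (γ : Profile n T Y U) (ω : Traj n K X Y U) : ℝ :=
  (M.S1 (ω.1 0)).toReal
  * (∏ j : Fin K, (M.Q 0 j (ω.1 0) M.u0 (ω.2.1 0 j)).toReal)
  * (∏ t : Fin n, if 0 < t.val then
      (M.Strans t (ω.1 (tprev t)) (ω.2.2 (tprev t)) (ω.1 t)).toReal
      * ∏ j : Fin K, (M.Q t j (ω.1 t) (ω.2.2 (tprev t)) (ω.2.1 t j)).toReal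
    else 1)
  * ∏ t : Fin n, ∏ j : Fin K,
      (if ω.2.2 t j = γ j t (infoOf T ω t j) then (1 : ℝ) else 0)

section Probability

variable {n T K : ℕ} [NeZero n] {X : Type} [Fintype X] {Y U : Fin K → Type}
  [∀ j, Fintype (Y j)] [∀ j, Fintype (U j)]

/-- Probability of an event under the measure induced by `γ`. -/
def Pr (M : Model n K X Y U) (γ : Profile n T Y U) (A : Traj n K X Y U → Prop) : ℝ :=
  ∑ ω : Traj n K X Y U, if A ω then prob M T γ ω else 0

/-- Expectation under the measure induced by `γ`. -/
def expec (M : Model n K X Y U) (γ : Profile n T Y U) (f : Traj n K X Y U → ℝ) : ℝ :=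
  ∑ ω : Traj n K X Y U, prob M T γ ω * f ω

/-- Conditional probability `P(A | B)`. -/
def condPr (M : Model n K X Y U) (γ : Profile n T Y U)
    (A B : Traj n K X Y U → Prop) : ℝ :=
  Pr M γ (fun ω => A ω ∧ B ω) / Pr M γ B

/-- Conditional expectation `E(f | B)`. -/
def condExpec (M : Model n K X Y U) (γ : Profile n T Y U)
    (f : Traj n K X Y U → ℝ) (B : Traj n K X Y U → Prop) : ℝ :=
  (∑ ω : Traj n K X Y U, if B ω then prob M T γ ω * f ω else 0) / Pr M γ B

/-- The private posterior `Ξ_t^k[i](x, λ) = P(X_t = x, Λ_t^{-k} = λ | I_t^k = i)`. -/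
def Xi (M : Model n K X Y U) (γ : Profile n T Y U) (t : Fin n) (k : Fin K)
    (i : Info n T Y U t k) (x : X) (lam : PrivOthers n T Y U t k) : ℝ :=
  condPr M γ (fun ω => ω.1 t = x ∧ privOthersOf T ω t k = lam)
    (fun ω => infoOf T ω t k = i)

/-- The centralized posterior `Θ_t[δ](x) = P(X_{t-T} = x | Δ_t^{(K)} = δ)`. -/
def Theta (M : Model n K X Y U) (γ : Profile n T Y U) (t : Fin n)
    (δ : SharedHist n T Y U t) (x : X) : ℝ :=
  condPr M γ (fun ω => ω.1 ⟨t.val - T, lt_of_le_of_lt (Nat.sub_le _ _) t.isLt⟩ = x)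
    (fun ω => sharedOf T ω t = δ)

/-- The joint centralized posterior
`Π_t^{γ}[δ](x, λ^{(K)}) = P(X_t = x, Λ_t^{(K)} = λ^{(K)} | Δ_t^{(K)} = δ)`. -/
def PiPost (M : Model n K X Y U) (γ : Profile n T Y U) (t : Fin n)
    (δ : SharedHist n T Y U t) (x : X) (lam : PrivAll n T Y U t) : ℝ :=
  condPr M γ (fun ω => ω.1 t = x ∧ privAllOf T ω t = lam)
    (fun ω => sharedOf T ω t = δ)

/-- The payoff `J_n(γ^{(K)})`. -/
def payoff (M : Model n K X Y U) (γ : Profile n T Y U)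
    (ℓ : Fin n → X → ((j : Fin K) → U j) → ℝ) : ℝ :=
  expec M γ (fun ω => ∑ t : Fin n, ℓ t (ω.1 t) (ω.2.2 t))

/-- The total cost from time `t` on. -/
def tailCost (ℓ : Fin n → X → ((j : Fin K) → U j) → ℝ) (t : Fin n)
    (ω : Traj n K X Y U) : ℝ :=
  ∑ s : Fin n, if t.val ≤ s.val then ℓ s (ω.1 s) (ω.2.2 s) else 0

/-- The cost-to-go `J_{t,n}^{γ}(i)` of agent `k`. -/
def costToGo (M : Model n K X Y U) (γ : Profile n T Y U)
    (ℓ : Fin n → X → ((j : Fin K) → U j) → ℝ) (t : Fin n) (k : Fin K)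
    (i : Info n T Y U t k) : ℝ :=
  condExpec M γ (tailCost ℓ t) (fun ω => infoOf T ω t k = i)

end Probability

/-- Joint action built from agent `k`'s action and the other agents' actions. -/
def jointAct {K : ℕ} {U : Fin K → Type} (k : Fin K) (u : U k)
    (v : (j : {j : Fin K // j ≠ k}) → U j.val) : (j : Fin K) → U j :=
  fun j => if h : j = k then cast (congrArg U h.symm) u else v ⟨j, h⟩

/-- The actions `γ_t^{-k}(δ, λ)` prescribed to the other agents. -/
def othersAct {n T K : ℕ} {Y U : Fin K → Type} (γ : Profile n T Y U) (t : Fin n)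
    (k : Fin K) (δ : SharedHist n T Y U t) (lam : PrivOthers n T Y U t k) :
    (j : {j : Fin K // j ≠ k}) → U j.val :=
  fun j => γ j.val t (δ, lam j)

section DP

variable {n T K : ℕ} [NeZero n] {X : Type} [Fintype X] {Y U : Fin K → Type}
  [∀ j, Fintype (Y j)] [∀ j, Fintype (U j)]

/-- The instantaneous term of agent `k`'s DP equation at action `u`:
`∑_{(x,λ)} ℓ(t, x, (u, γ_t^{-k}(δ, λ))) Ξ_t^k[i](x, λ)`. -/
def dpStage (M : Model n K X Y U) (γ : Profile n T Y U)
    (ℓ : Fin n → X → ((j : Fin K) → U j) → ℝ) (t : Fin n) (k : Fin K)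
    (i : Info n T Y U t k) (u : U k) : ℝ :=
  ∑ x : X, ∑ lam : PrivOthers n T Y U t k,
    ℓ t x (jointAct k u (othersAct γ t k i.1 lam)) * Xi M γ t k i x lam

/-- Agent `k`'s best-response value `𝒱_t^{γ^{-k,o}}(i)`, with the other agents'
strategies read off from `γo`. -/
def brVal (M : Model n K X Y U) (γo : Profile n T Y U)
    (ℓ : Fin n → X → ((j : Fin K) → U j) → ℝ) (t : Fin n) (k : Fin K)
    (i : Info n T Y U t k) : ℝ :=
  sInf {v : ℝ | ∃ γk : Strategy n T Y U k,
    0 < Pr M (Function.update γo k γk) (fun ω => infoOf T ω t k = i) ∧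
    v = costToGo M (Function.update γo k γk) ℓ t k i}

end DP

/-- Shared history at time `t+1` obtained from the one at time `t` by appending
the newly shared data (when `t+1 < T` nothing new is shared). -/
def stepShared {n T K : ℕ} {Y U : Fin K → Type} {t t' : Fin n} (hsucc : t'.val = t.val + 1)
    (δ : SharedHist n T Y U t) (wnew : (j : Fin K) → Y j × U j) : SharedHist n T Y U t' :=
  fun j => (fun s => if h : s.1.val + T ≤ t.val then (δ j).1 ⟨s.1, h⟩ else (wnew j).1,
            fun s => if h : s.1.val + T ≤ t.val then (δ j).2 ⟨s.1, h⟩ else (wnew j).2)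

/-- The (unique) time-`t` value `Λ_t^{-k}` determined by a time-`t+1` value
`Λ_{t+1}^{-k}` together with the newly shared data. -/
def hatPrivOthers {n T K : ℕ} {Y U : Fin K → Type} {t t' : Fin n}
    (hsucc : t'.val = t.val + 1) {k : Fin K} (lam' : PrivOthers n T Y U t' k)
    (wnew : (j : {j : Fin K // j ≠ k}) → Y j.val × U j.val) : PrivOthers n T Y U t k :=
  fun j =>
    (fun s => if h : s.1.val + T = t'.val then (wnew j).1
              else (lam' j).1 ⟨s.1, by have hs := s.2; omega⟩,
     fun s => if h : s.1.val + T = t'.val then (wnew j).2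
              else (lam' j).2 ⟨s.1, by have hs := s.2; omega⟩)

/-- The (unique) time-`t` value `Λ_t^{(K)}` determined by a time-`t+1` value
`Λ_{t+1}^{(K)}` together with the newly shared data. -/
def hatPrivAll {n T K : ℕ} {Y U : Fin K → Type} {t t' : Fin n}
    (hsucc : t'.val = t.val + 1) (lam' : PrivAll n T Y U t')
    (wnew : (j : Fin K) → Y j × U j) : PrivAll n T Y U t :=
  fun j =>
    (fun s => if h : s.1.val + T = t'.val then (wnew j).1
              else (lam' j).1 ⟨s.1, by have hs := s.2; omega⟩,
     fun s => if h : s.1.val + T = t'.val then (wnew j).2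
              else (lam' j).2 ⟨s.1, by have hs := s.2; omega⟩)

/-- The time-`t+1` information of agent `k` obtained from its time-`t`
information by appending its new observation `ynew`, its action `unew`, and the
newly shared data `wnew` of the other agents. -/
def stepInfo {n T K : ℕ} {Y U : Fin K → Type} {t t' : Fin n}
    (hsucc : t'.val = t.val + 1) (hT2 : 2 ≤ T) {k : Fin K}
    (i : Info n T Y U t k) (ynew : Y k) (unew : U k)
    (wnew : (j : {j : Fin K // j ≠ k}) → Y j.val × U j.val) : Info n T Y U t' k :=
  (fun j =>
    (fun s =>
      if h : s.1.val + T ≤ t.val then (i.1 j).1 ⟨s.1, h⟩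
      else if hk : j = k then
        cast (congrArg Y hk.symm) (i.2.1 ⟨s.1, by have hs := s.2; omega⟩)
      else (wnew ⟨j, hk⟩).1,
     fun s =>
      if h : s.1.val + T ≤ t.val then (i.1 j).2 ⟨s.1, h⟩
      else if hk : j = k then
        cast (congrArg U hk.symm) (i.2.2 ⟨s.1, by have hs := s.2; omega⟩)
      else (wnew ⟨j, hk⟩).2),
   (fun s =>
      if h : s.1.val = t'.val then ynew
      else i.2.1 ⟨s.1, by have hs := s.2; omega⟩,
    fun s =>
      if h : s.1.val = t.val then unew
      else i.2.2 ⟨s.1, by have hs := s.2; omega⟩))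

/-- The newest (time `t+1`) observation entry of a time-`t+1` private history. -/
def newestObs {n T K : ℕ} {Y U : Fin K → Type} {t' : Fin n} (hT1 : 1 ≤ T) {k : Fin K}
    (lam : PrivHist n T Y U t' k) : Y k :=
  lam.1 ⟨t', by omega⟩

/-- The newest (time `t`) action entry of a time-`t+1` private history (`T ≥ 2`). -/
def newestAct {n T K : ℕ} {Y U : Fin K → Type} {t t' : Fin n}
    (hsucc : t'.val = t.val + 1) (hT2 : 2 ≤ T) {k : Fin K}
    (lam : PrivHist n T Y U t' k) : U k :=
  lam.2 ⟨t, by omega⟩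

/-- Agent `k`'s own observation history `Y_{1:t}^k` read off from `I_t^k`. -/
def ownY {n T K : ℕ} {Y U : Fin K → Type} {t : Fin n} {k : Fin K}
    (i : Info n T Y U t k) : {s : Fin n // s.val ≤ t.val} → Y k :=
  fun s => if h : s.1.val + T ≤ t.val then (i.1 k).1 ⟨s.1, h⟩
           else i.2.1 ⟨s.1, by have hs := s.2; omega⟩

/-- Agent `k`'s own action history `U_{1:t-1}^k` read off from `I_t^k`. -/
def ownU {n T K : ℕ} {Y U : Fin K → Type} {t : Fin n} {k : Fin K}
    (i : Info n T Y U t k) : {s : Fin n // s.val < t.val} → U k :=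
  fun s => if h : s.1.val + T ≤ t.val then (i.1 k).2 ⟨s.1, h⟩
           else i.2.2 ⟨s.1, by have hs := s.2; omega⟩

/-! ### Centralized (single-agent) POMDP -/

abbrev CTraj (n : ℕ) (Xk Yk Uk : Type) : Type :=
  (Fin n → Xk) × (Fin n → Yk) × (Fin n → Uk)

/-- A centralized strategy `U_t = γ_t(Y_{1:t}, U_{1:t-1})`. -/
abbrev CStrategy (n : ℕ) (Yk Uk : Type) : Type :=
  (t : Fin n) → ({s : Fin n // s.val ≤ t.val} → Yk) → ({s : Fin n // s.val < t.val} → Uk) → Uk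

/-- A centralized POMDP model (observation kernel depending on the state only). -/
structure CModel (n : ℕ) (Xk Yk Uk : Type) where
  S1 : PMF Xk
  Strans : Fin n → Xk → Uk → PMF Xk
  Q : Fin n → Xk → PMF Yk

def cprob {n : ℕ} [NeZero n] {Xk Yk Uk : Type} (M : CModel n Xk Yk Uk)
    (γ : CStrategy n Yk Uk) (ω : CTraj n Xk Yk Uk) : ℝ :=
  (M.S1 (ω.1 0)).toReal * (M.Q 0 (ω.1 0) (ω.2.1 0)).toReal
  * (∏ t : Fin n, if 0 < t.val then
      (M.Strans t (ω.1 (tprev t)) (ω.2.2 (tprev t)) (ω.1 t)).toReal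
      * (M.Q t (ω.1 t) (ω.2.1 t)).toReal
    else 1)
  * ∏ t : Fin n,
      (if ω.2.2 t = γ t (fun s => ω.2.1 s.1) (fun s => ω.2.2 s.1) then (1:ℝ) else 0)

/-- Expected total cost of a centralized strategy. -/
def cExpCost {n : ℕ} [NeZero n] {Xk Yk Uk : Type} [Fintype Xk] [Fintype Yk] [Fintype Uk]
    (M : CModel n Xk Yk Uk) (ℓk : Fin n → Xk → Uk → ℝ) (γ : CStrategy n Yk Uk) : ℝ :=
  ∑ ω : CTraj n Xk Yk Uk, cprob M γ ω * ∑ t : Fin n, ℓk t (ω.1 t) (ω.2.2 t)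

/-- Optimal value of the centralized POMDP. -/
def cValue {n : ℕ} [NeZero n] {Xk Yk Uk : Type} [Fintype Xk] [Fintype Yk] [Fintype Uk]
    (M : CModel n Xk Yk Uk) (ℓk : Fin n → Xk → Uk → ℝ) : ℝ :=
  sInf {v : ℝ | ∃ γ : CStrategy n Yk Uk, v = cExpCost M ℓk γ}

/-
The stages after `t - T` integrate out: each stage is a stochastic kernel in its own data,
because (as `T ≥ 1`) the prescribed actions are computed from information that does not contain
them. What remains of `P^γ(X_{t-T} = x, Δ_t = δ)` is a product of the strategy-free kernels of
the stages `s ≤ t - T` and of the indicators that the actions at those stages are the prescribed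
ones. Everything these indicators read has been shared by time `t`, so on `{Δ_t = δ}` they are a
constant `c(γ, δ)`; it is nonzero because `P^γ(Δ_t = δ) > 0`, and it cancels from the posterior.
-/

theorem PMF.sum_toReal_eq_one {α : Type*} [Fintype α] (p : PMF α) :
    ∑ a, (p a).toReal = 1 := by
  rw [← ENNReal.toReal_one, ← p.tsum_coe, tsum_fintype]
  exact (ENNReal.toReal_sum fun a _ => p.apply_ne_top a).symm

theorem Fintype.sum_prod_pmf_toReal_eq_one {ι : Type*} [Fintype ι] [DecidableEq ι]
    {β : ι → Type*} [∀ i, Fintype (β i)] (p : ∀ i, PMF (β i)) :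
    ∑ b : ∀ i, β i, ∏ i, (p i (b i)).toReal = 1 := by
  rw [← Fintype.prod_sum fun i a => (p i a).toReal]
  simp only [PMF.sum_toReal_eq_one, Finset.prod_const_one]

theorem Fintype.sum_prod_ite_eq {ι : Type*} [Fintype ι] [DecidableEq ι]
    {β : ι → Type*} [∀ i, Fintype (β i)] [∀ i, DecidableEq (β i)] {R : Type*} [CommSemiring R]
    (v : ∀ i, β i) :
    ∑ c : ∀ i, β i, ∏ i, (if c i = v i then (1 : R) else 0) = 1 := by
  simp [Finset.prod_boole, ← funext_iff]

theorem Fintype.sum_sum_update {ι : Type*} [Fintype ι] [DecidableEq ι]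
    {β : ι → Type*} [∀ i, Fintype (β i)] {R : Type*} [AddCommMonoid R]
    (i : ι) (g : (∀ j, β j) → R) :
    ∑ f, ∑ a, g (Function.update f i a) = Fintype.card (β i) • ∑ f, g f := by
  let e := Equiv.piSplitAt i β
  have hupdate : ∀ b a r, Function.update (e.symm (b, r)) i a = e.symm (a, r) := by
    intro b a r
    refine e.injective ?_
    refine Prod.ext (by simp [e]) (funext fun j => ?_)
    simp [e, Function.update_of_ne j.2, dif_neg j.2]
  rw [← e.symm.sum_comp, Fintype.sum_prod_type, ← e.symm.sum_comp, Fintype.sum_prod_type]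
  simp only [hupdate, Finset.sum_const, Finset.card_univ]
  rw [Finset.sum_comm, Finset.smul_sum]

section

variable {n T K : ℕ} {X : Type} {Y U : Fin K → Type}

abbrev Stage (K : ℕ) (X : Type) (Y U : Fin K → Type) : Type :=
  X × ((j : Fin K) → Y j) × ((j : Fin K) → U j)

def trajStages : Traj n K X Y U ≃ (Fin n → Stage K X Y U) where
  toFun ω s := (ω.1 s, ω.2.1 s, ω.2.2 s)
  invFun f := (fun s => (f s).1, fun s => (f s).2.1, fun s => (f s).2.2)
  left_inv _ := rfl
  right_inv _ := rfl

def updateAt (ω : Traj n K X Y U) (m : Fin n) (v : Stage K X Y U) : Traj n K X Y U :=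
  (Function.update ω.1 m v.1, Function.update ω.2.1 m v.2.1, Function.update ω.2.2 m v.2.2)

def AgreeBefore (m : ℕ) (ω ω' : Traj n K X Y U) : Prop :=
  ∀ s : Fin n, s.val < m → ω.1 s = ω'.1 s ∧ ω.2.1 s = ω'.2.1 s ∧ ω.2.2 s = ω'.2.2 s

theorem updateAt_eq (ω : Traj n K X Y U) (m : Fin n) (v : Stage K X Y U) :
    updateAt ω m v = trajStages.symm (Function.update (trajStages ω) m v) := by
  rw [Equiv.eq_symm_apply]
  funext s
  rcases eq_or_ne s m with rfl | hs
  · simp [updateAt, trajStages]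
  · simp [updateAt, trajStages, hs]

theorem agreeBefore_updateAt (ω : Traj n K X Y U) (m : Fin n) (v : Stage K X Y U) :
    AgreeBefore m (updateAt ω m v) ω :=
  fun _ hs => by simp [updateAt, Function.update_of_ne (Fin.ne_of_lt hs)]

theorem AgreeBefore.mono {m m' : ℕ} {ω ω' : Traj n K X Y U} (h : AgreeBefore m ω ω')
    (hm : m' ≤ m) : AgreeBefore m' ω ω' :=
  fun s hs => h s (hs.trans_le hm)

theorem sum_sum_updateAt [Fintype X] [∀ j, Fintype (Y j)] [∀ j, Fintype (U j)] (m : Fin n)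
    (g : Traj n K X Y U → ℝ) :
    ∑ ω, ∑ v, g (updateAt ω m v) = Fintype.card (Stage K X Y U) * ∑ ω, g ω := by
  rw [← nsmul_eq_mul, ← trajStages.symm.sum_comp, ← trajStages.symm.sum_comp g,
    ← Fintype.sum_sum_update (β := fun _ => Stage K X Y U) m]
  simp only [updateAt_eq, Equiv.apply_symm_apply]

theorem sum_eq_card_mul_sum_mul [Fintype X] [∀ j, Fintype (Y j)] [∀ j, Fintype (U j)]
    (m : Fin n) {f w : Traj n K X Y U → ℝ}
    (hf : ∀ ω v, f (updateAt ω m v) = f ω) (hw : ∀ ω, ∑ v, w (updateAt ω m v) = 1) :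
    ∑ ω, f ω = Fintype.card (Stage K X Y U) * ∑ ω, f ω * w ω := by
  rw [← sum_sum_updateAt m]
  simp only [hf, ← Finset.mul_sum, hw, mul_one]

theorem sharedOf_eq_sharedOf_iff {ω ω' : Traj n K X Y U} {t : Fin n} :
    sharedOf T ω t = sharedOf T ω' t ↔
      ∀ r : Fin n, r.val + T ≤ t.val → ω.2.1 r = ω'.2.1 r ∧ ω.2.2 r = ω'.2.2 r := by
  simp only [sharedOf, funext_iff, Prod.ext_iff, Subtype.forall]
  grind

theorem infoOf_congr (hT : 1 ≤ T) {ω ω' : Traj n K X Y U} {s : Fin n}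
    (hy : ∀ r ≤ s, ω.2.1 r = ω'.2.1 r) (hu : ∀ r < s, ω.2.2 r = ω'.2.2 r) (j : Fin K) :
    infoOf T ω s j = infoOf T ω' s j := by
  simp only [infoOf, privOf, Prod.mk.injEq]
  refine ⟨sharedOf_eq_sharedOf_iff.2 fun r hr => ⟨hy r ?_, hu r ?_⟩,
    funext fun r => congrFun (hy r r.2.2) j, funext fun r => congrFun (hu r r.2.2) j⟩
  all_goals omega

def stageKernel (M : Model n K X Y U) (s : Fin n) (ω : Traj n K X Y U) : ℝ :=
  if 0 < s.val then
    (M.Strans s (ω.1 (tprev s)) (ω.2.2 (tprev s)) (ω.1 s)).toReal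
      * ∏ j, (M.Q s j (ω.1 s) (ω.2.2 (tprev s)) (ω.2.1 s j)).toReal
  else (M.S1 (ω.1 s)).toReal * ∏ j, (M.Q s j (ω.1 s) M.u0 (ω.2.1 s j)).toReal

def actionMatch (γ : Profile n T Y U) (s : Fin n) (ω : Traj n K X Y U) : ℝ :=
  ∏ j, if ω.2.2 s j = γ j s (infoOf T ω s j) then 1 else 0

theorem prob_eq_prod [NeZero n] (M : Model n K X Y U) (γ : Profile n T Y U)
    (ω : Traj n K X Y U) :
    prob M T γ ω = ∏ s, stageKernel M s ω * actionMatch γ s ω := by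
  -- `prob` keeps the kernel of stage `0` apart from the others.
  have hkernel : ∀ s, stageKernel M s ω = (if s = 0 then stageKernel M 0 ω else 1) *
      if 0 < s.val then stageKernel M s ω else 1 := by
    intro s
    rcases eq_or_ne s 0 with rfl | hs
    · simp
    · have : 0 < s.val := Fin.pos_iff_ne_zero.2 hs
      simp [hs, this]
  rw [Finset.prod_mul_distrib, Finset.prod_congr rfl fun s _ => hkernel s,
    Finset.prod_mul_distrib, Finset.prod_ite_eq']
  simp only [prob, actionMatch, stageKernel, Finset.mem_univ, if_true, Fin.val_zero, lt_irrefl,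
    if_false]
  congr 2
  exact Finset.prod_congr rfl fun s _ => by split_ifs <;> rfl

theorem sum_stage_eq_one [Fintype X] [∀ j, Fintype (Y j)] [∀ j, Fintype (U j)]
    (P : PMF X) (Q : X → ∀ j, PMF (Y j)) (g : X → (∀ j, Y j) → ∀ j, U j) :
    ∑ v : Stage K X Y U, ((P v.1).toReal * ∏ j, (Q v.1 j (v.2.1 j)).toReal)
      * ∏ j, (if v.2.2 j = g v.1 v.2.1 j then 1 else 0) = 1 := by
  simp only [Fintype.sum_prod_type, ← Finset.mul_sum, Fintype.sum_prod_ite_eq, mul_one,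
    Fintype.sum_prod_pmf_toReal_eq_one, PMF.sum_toReal_eq_one]

theorem sum_stageKernel_mul_actionMatch_updateAt [Fintype X] [∀ j, Fintype (Y j)]
    [∀ j, Fintype (U j)] (hT : 1 ≤ T) (M : Model n K X Y U) (γ : Profile n T Y U)
    (m : Fin n) (ω : Traj n K X Y U) :
    ∑ v, stageKernel M m (updateAt ω m v) * actionMatch γ m (updateAt ω m v) = 1 := by
  -- As `T ≥ 1`, the information `I_m` holds no stage-`m` action.
  obtain ⟨g, hg⟩ : ∃ g : X → (∀ j, Y j) → ∀ j, U j,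
      ∀ v j, γ j m (infoOf T (updateAt ω m v) m j) = g v.1 v.2.1 j := by
    refine ⟨fun a b j => γ j m (infoOf T (updateAt ω m (a, b, ω.2.2 m)) m j),
      fun v j => congrArg _ (infoOf_congr (ω := updateAt ω m v)
        (ω' := updateAt ω m (v.1, v.2.1, ω.2.2 m)) hT (fun r _ => rfl) (fun r hr => ?_) j)⟩
    simp only [updateAt, Function.update_of_ne hr.ne]
  simp only [stageKernel, actionMatch, hg]
  by_cases hm : 0 < m.val
  · have hne : tprev m ≠ m := Fin.ne_of_val_ne (by simp only [tprev]; omega)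
    simp only [hm, if_true, updateAt, Function.update_self, Function.update_of_ne hne]
    exact sum_stage_eq_one (M.Strans m (ω.1 (tprev m)) (ω.2.2 (tprev m)))
      (fun a j => M.Q m j a (ω.2.2 (tprev m))) g
  · simp only [hm, if_false, updateAt, Function.update_self]
    exact sum_stage_eq_one M.S1 (fun a j => M.Q m j a M.u0) g

theorem stageKernel_congr (M : Model n K X Y U) {s : Fin n} {ω ω' : Traj n K X Y U}
    (h : AgreeBefore (s.val + 1) ω ω') : stageKernel M s ω = stageKernel M s ω' := by
  have hs := h s (Nat.lt_succ_self _)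
  have hp := h (tprev s) (by simp only [tprev]; omega)
  simp only [stageKernel, hs.1, hs.2.1, hp.1, hp.2.2]

theorem actionMatch_congr (hT : 1 ≤ T) (γ : Profile n T Y U) {s : Fin n}
    {ω ω' : Traj n K X Y U} (hy : ∀ r ≤ s, ω.2.1 r = ω'.2.1 r)
    (hu : ∀ r ≤ s, ω.2.2 r = ω'.2.2 r) : actionMatch γ s ω = actionMatch γ s ω' := by
  simp only [actionMatch, hu s le_rfl,
    infoOf_congr hT hy (fun r hr => hu r hr.le)]

def probBefore (M : Model n K X Y U) (γ : Profile n T Y U) (m : ℕ) (ω : Traj n K X Y U) : ℝ :=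
  ∏ s : Fin n with s.val < m, stageKernel M s ω * actionMatch γ s ω

theorem probBefore_self [NeZero n] (M : Model n K X Y U) (γ : Profile n T Y U)
    (ω : Traj n K X Y U) : probBefore M γ n ω = prob M T γ ω := by
  simp [probBefore, prob_eq_prod]

theorem probBefore_succ (M : Model n K X Y U) (γ : Profile n T Y U) (m : Fin n)
    (ω : Traj n K X Y U) :
    probBefore M γ (m.val + 1) ω =
      probBefore M γ m ω * (stageKernel M m ω * actionMatch γ m ω) := by
  have : Finset.univ.filter (fun s : Fin n => s.val < m.val + 1) =
      insert m (Finset.univ.filter fun s : Fin n => s.val < m.val) := by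
    ext s
    simp only [Finset.mem_filter, Finset.mem_univ, true_and, Finset.mem_insert, Fin.ext_iff]
    omega
  rw [probBefore, this, Finset.prod_insert (by simp), mul_comm, probBefore]

theorem probBefore_congr (hT : 1 ≤ T) (M : Model n K X Y U) (γ : Profile n T Y U) {m : ℕ}
    {ω ω' : Traj n K X Y U} (h : AgreeBefore m ω ω') :
    probBefore M γ m ω = probBefore M γ m ω' := by
  refine Finset.prod_congr rfl fun s hs => ?_
  have hs : s.val < m := (Finset.mem_filter.1 hs).2
  rw [stageKernel_congr M (h.mono hs), actionMatch_congr hT γ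
    (fun r hr => (h r (lt_of_le_of_lt hr hs)).2.1) (fun r hr => (h r (lt_of_le_of_lt hr hs)).2.2)]

/-- Each later stage sums to one over its own data, but the sum over trajectories also runs over
that data unconstrained: hence one factor `|Stage|` per stage after `m`. -/
theorem card_pow_mul_Pr_eq_sum_probBefore [NeZero n] [Fintype X] [∀ j, Fintype (Y j)]
    [∀ j, Fintype (U j)] (hT : 1 ≤ T) (M : Model n K X Y U) (γ : Profile n T Y U)
    {A : Traj n K X Y U → Prop} {m : ℕ} (hmn : m ≤ n)
    (hA : ∀ ω ω', AgreeBefore m ω ω' → (A ω ↔ A ω')) :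
    (Fintype.card (Stage K X Y U) : ℝ) ^ (n - m) * Pr M γ A =
      ∑ ω, if A ω then probBefore M γ m ω else 0 := by
  induction hmn using Nat.decreasingInduction with
  | self => simp [Pr, probBefore_self]
  | of_succ k hk ih =>
    have hf : ∀ ω v, (if A (updateAt ω ⟨k, hk⟩ v) then
        probBefore M γ k (updateAt ω ⟨k, hk⟩ v) else 0) = if A ω then probBefore M γ k ω else 0 :=
      fun ω v => by
        have hagree : AgreeBefore k (updateAt ω ⟨k, hk⟩ v) ω :=
          agreeBefore_updateAt ω ⟨k, hk⟩ v
        simp only [hA _ _ hagree, probBefore_congr hT M γ hagree]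
    rw [sum_eq_card_mul_sum_mul ⟨k, hk⟩ hf
        (w := fun ω => stageKernel M ⟨k, hk⟩ ω * actionMatch γ ⟨k, hk⟩ ω)
        (sum_stageKernel_mul_actionMatch_updateAt hT M γ _),
      show n - k = n - (k + 1) + 1 by omega, pow_succ', mul_assoc,
      ih fun ω ω' h => hA ω ω' (h.mono k.le_succ)]
    simp only [ite_mul, zero_mul, ← probBefore_succ M γ ⟨k, hk⟩]

theorem actionMatch_eq_of_sharedOf_eq (hT : 1 ≤ T) (γ : Profile n T Y U) {t s : Fin n}
    {ω ω' : Traj n K X Y U} (h : sharedOf T ω t = sharedOf T ω' t) (hs : s.val + T ≤ t.val) :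
    actionMatch γ s ω = actionMatch γ s ω' := by
  have h' := sharedOf_eq_sharedOf_iff.1 h
  exact actionMatch_congr hT γ (fun r hr => (h' r (by omega)).1) (fun r hr => (h' r (by omega)).2)

theorem sharedOf_eq_of_agreeBefore {t : Fin n} {ω ω' : Traj n K X Y U}
    (h : AgreeBefore (t.val - T + 1) ω ω') : sharedOf T ω t = sharedOf T ω' t :=
  sharedOf_eq_sharedOf_iff.2 fun r hr => ⟨(h r (by omega)).2.1, (h r (by omega)).2.2⟩

def pastKernelMass [Fintype X] [∀ j, Fintype (Y j)] [∀ j, Fintype (U j)]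
    (M : Model n K X Y U) (m : ℕ) (A : Traj n K X Y U → Prop) : ℝ :=
  ∑ ω, if A ω then ∏ s : Fin n with s.val < m, stageKernel M s ω else 0

theorem card_pow_mul_Pr_eq_mul_pastKernelMass [NeZero n] [Fintype X] [∀ j, Fintype (Y j)]
    [∀ j, Fintype (U j)] (hT : 1 ≤ T) {t : Fin n} (hTt : T ≤ t.val) (M : Model n K X Y U)
    (γ : Profile n T Y U) (ω₀ : Traj n K X Y U) {A : Traj n K X Y U → Prop}
    (hA : ∀ ω ω', AgreeBefore (t.val - T + 1) ω ω' → (A ω ↔ A ω'))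
    (hA₀ : ∀ ω, A ω → sharedOf T ω t = sharedOf T ω₀ t) :
    (Fintype.card (Stage K X Y U) : ℝ) ^ (n - (t.val - T + 1)) * Pr M γ A =
      (∏ s : Fin n with s.val < t.val - T + 1, actionMatch γ s ω₀) *
        pastKernelMass M (t.val - T + 1) A := by
  rw [card_pow_mul_Pr_eq_sum_probBefore hT M γ (by omega) hA, pastKernelMass, Finset.mul_sum]
  refine Finset.sum_congr rfl fun ω _ => ?_
  split_ifs with hω
  · rw [probBefore, Finset.prod_mul_distrib, mul_comm]
    congr 1
    refine Finset.prod_congr rfl fun s hs => actionMatch_eq_of_sharedOf_eq hT γ (hA₀ ω hω) ?_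
    have := (Finset.mem_filter.1 hs).2
    omega
  · rw [mul_zero]

theorem Theta_eq_div_pastKernelMass [NeZero n] [Fintype X] [∀ j, Fintype (Y j)]
    [∀ j, Fintype (U j)] (hT : 1 ≤ T) {t : Fin n} (hTt : T ≤ t.val) (M : Model n K X Y U)
    {γ : Profile n T Y U} {δ : SharedHist n T Y U t}
    (hpos : 0 < Pr M γ (fun ω => sharedOf T ω t = δ)) (x : X) :
    Theta M γ t δ x =
      pastKernelMass M (t.val - T + 1)
          (fun ω => ω.1 ⟨t.val - T, by omega⟩ = x ∧ sharedOf T ω t = δ) /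
        pastKernelMass M (t.val - T + 1) (fun ω => sharedOf T ω t = δ) := by
  obtain ⟨ω₀, rfl⟩ : ∃ ω₀ : Traj n K X Y U, sharedOf T ω₀ t = δ := by
    by_contra! h
    simp [Pr, h] at hpos
  have hjoint := card_pow_mul_Pr_eq_mul_pastKernelMass hT hTt M γ ω₀
    (A := fun ω => ω.1 ⟨t.val - T, by omega⟩ = x ∧ sharedOf T ω t = sharedOf T ω₀ t)
    (fun ω ω' h => by rw [(h _ (Nat.lt_succ_self _)).1, sharedOf_eq_of_agreeBefore h])
    (fun ω hω => hω.2)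
  have hshared := card_pow_mul_Pr_eq_mul_pastKernelMass hT hTt M γ ω₀
    (A := fun ω => sharedOf T ω t = sharedOf T ω₀ t)
    (fun ω ω' h => by rw [sharedOf_eq_of_agreeBefore h]) (fun ω hω => hω)
  have hN : (0 : ℝ) < Fintype.card (Stage K X Y U) ^ (n - (t.val - T + 1)) :=
    pow_pos (Nat.cast_pos.2 (Fintype.card_pos_iff.2 ⟨trajStages ω₀ t⟩)) _
  have hc : (∏ s : Fin n with s.val < t.val - T + 1, actionMatch γ s ω₀) ≠ 0 :=
    left_ne_zero_of_mul (hshared ▸ (mul_pos hN hpos).ne')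
  simp only [Theta, condPr]
  rw [← mul_div_mul_left _ _ hN.ne', hjoint, hshared, mul_div_mul_left _ _ hc]

end

theorem centralized_posterior_independent_of_strategies_general
    (n T K : ℕ) [NeZero n] (hT1 : 1 ≤ T)
    (X : Type) [Fintype X]
    (Y U : Fin K → Type) [∀ j, Fintype (Y j)]
    [∀ j, Fintype (U j)]
    (M : Model n K X Y U)
    (γ1 γ2 : Profile n T Y U)
    (t : Fin n) (hTt : T ≤ t.val)
    (δ : SharedHist n T Y U t)
    (h1 : 0 < Pr M γ1 (fun ω => sharedOf T ω t = δ))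
    (h2 : 0 < Pr M γ2 (fun ω => sharedOf T ω t = δ)) :
    ∀ x : X, Theta M γ1 t δ x = Theta M γ2 t δ x := fun x => by
  rw [Theta_eq_div_pastKernelMass hT1 hTt M h1 x, Theta_eq_div_pastKernelMass hT1 hTt M h2 x]

/-- the centralized posterior does not depend on the strategy profile. -/
theorem centralized_posterior_independent_of_strategies
    (n T K : ℕ) [NeZero n] (hT1 : 1 ≤ T) (hTn : T ≤ n) (hK : 2 ≤ K)
    (X : Type) [Fintype X] [Nonempty X]
    (Y U : Fin K → Type) [∀ j, Fintype (Y j)] [∀ j, Nonempty (Y j)]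
    [∀ j, Fintype (U j)] [∀ j, Nonempty (U j)]
    (M : Model n K X Y U)
    (γ1 γ2 : Profile n T Y U)
    (t : Fin n) (hTt : T ≤ t.val)
    (δ : SharedHist n T Y U t)
    (h1 : 0 < Pr M γ1 (fun ω => sharedOf T ω t = δ))
    (h2 : 0 < Pr M γ2 (fun ω => sharedOf T ω t = δ)) :
    ∀ x : X, Theta M γ1 t δ x = Theta M γ2 t δ x :=
  centralized_posterior_independent_of_strategies_general n T K hT1 X Y U M γ1 γ2 t hTt δ h1 h2
end
end

section
/- For every strategy profile γ^{(K)} there exists a strategy profile γ̄^{(K)} such that each γ̄_t^k is a function only of the pair (Δ_t^{(K)}, Y_{t−T+1:t}^k) — in particular it does not depend on agent k's own past controls U_{t−T+1:t−1}^k — and such that P^{γ^{(K)}}-almost surely γ̄_t^k(Δ_t^{(K)}, Y_{t−T+1:t}^k) = γ_t^k(I_t^k) for every 1 ≤ t ≤ n and every 1 ≤ k ≤ K. Consequently γ̄^{(K)} induces the same trajectory measure and the same payoff: P^{γ̄^{(K)}} = P^{γ^{(K)}} and J_n(γ̄^{(K)}) = J_n(γ^{(K)}). -/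
open scoped Classical BigOperators

noncomputable section

/-! ### Auxiliary definitions for statement 14 -/

/-- Reconstruct agent `k`'s past action at time `s < t` from the shared data
`δ` and its own recent observations `yp`. -/
def reconU {n T K : ℕ} {Y U : Fin K → Type} (γ : Profile n T Y U)
    (t : Fin n) (k : Fin K) (δ : SharedHist n T Y U t)
    (yp : PrivYIdx n T t → Y k) (s : Fin n) (hs : s.val < t.val) : U k :=
  if h : s.val + T ≤ t.val then (δ k).2 ⟨s, h⟩
  else
    γ k s
      (fun j => (fun s' => (δ j).1 ⟨s'.1, by have := s'.2; omega⟩,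
                 fun s' => (δ j).2 ⟨s'.1, by have := s'.2; omega⟩),
       (fun s' => if h' : s'.1.val + T ≤ t.val then (δ k).1 ⟨s'.1, h'⟩
                  else yp ⟨s'.1, by have := s'.2; omega⟩,
        fun s' => reconU γ t k δ yp s'.1 (by have := s'.2; omega)))
termination_by s.val
decreasing_by have := s'.2; omega

/-- The modified profile: reconstruct one's own past actions instead of
recalling them. -/
def barProfile {n T K : ℕ} {Y U : Fin K → Type} (γ : Profile n T Y U) :
    Profile n T Y U :=
  fun k t i => γ k t (i.1, (i.2.1, fun s => reconU γ t k i.1 i.2.1 s.1 s.2.2))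

lemma reconU_correct {n K : ℕ} {X : Type} {Y U : Fin K → Type} {T : ℕ}
    (γ : Profile n T Y U) (ω : Traj n K X Y U) (t : Fin n) (k : Fin K)
    (H : ∀ s : Fin n, s.val < t.val → ω.2.2 s k = γ k s (infoOf T ω s k)) :
    ∀ (m : ℕ) (s : Fin n) (hs : s.val < t.val), s.val < m →
      reconU γ t k (sharedOf T ω t) (privOf T ω t k).1 s hs = ω.2.2 s k := by
  intro m
  induction m with
  | zero => intro s hs h; omega
  | succ m ih =>
    intro s hs hm
    rw [reconU]
    split
    · rfl
    · rw [H s hs]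
      refine congrArg (γ k s) ?_
      refine Prod.ext rfl (Prod.ext ?_ ?_)
      · funext s'
        dsimp only
        by_cases h' : s'.1.val + T ≤ t.val
        · rw [dif_pos h']; rfl
        · rw [dif_neg h']; rfl
      · funext s'
        exact ih s'.1 (by have := s'.2; omega) (by have := s'.2; omega)

lemma barProfile_agree_step {n K : ℕ} {X : Type} {Y U : Fin K → Type} {T : ℕ}
    (γ : Profile n T Y U) (ω : Traj n K X Y U) (t : Fin n) (k : Fin K)
    (H : ∀ s : Fin n, s.val < t.val → ω.2.2 s k = γ k s (infoOf T ω s k)) :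
    barProfile γ k t (infoOf T ω t k) = γ k t (infoOf T ω t k) := by
  refine congrArg (γ k t) ?_
  refine Prod.ext rfl (Prod.ext rfl ?_)
  funext s
  exact reconU_correct γ ω t k H t.val s.1 s.2.2 s.2.2

lemma barProfile_agree_of_gamma {n K : ℕ} {X : Type} {Y U : Fin K → Type} {T : ℕ}
    (γ : Profile n T Y U) (ω : Traj n K X Y U)
    (H : ∀ (s : Fin n) (k : Fin K), ω.2.2 s k = γ k s (infoOf T ω s k)) :
    ∀ (t : Fin n) (k : Fin K),
      barProfile γ k t (infoOf T ω t k) = γ k t (infoOf T ω t k) :=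
  fun t k => barProfile_agree_step γ ω t k (fun s _ => H s k)

lemma barProfile_agree_of_bar {n K : ℕ} {X : Type} {Y U : Fin K → Type} {T : ℕ}
    (γ : Profile n T Y U) (ω : Traj n K X Y U)
    (H : ∀ (s : Fin n) (k : Fin K), ω.2.2 s k = barProfile γ k s (infoOf T ω s k)) :
    ∀ (t : Fin n) (k : Fin K),
      barProfile γ k t (infoOf T ω t k) = γ k t (infoOf T ω t k) := by
  have key : ∀ (m : ℕ) (t : Fin n), t.val < m → ∀ k : Fin K,
      barProfile γ k t (infoOf T ω t k) = γ k t (infoOf T ω t k) := by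
    intro m
    induction m with
    | zero => intro t ht; omega
    | succ m ih =>
      intro t ht k
      refine barProfile_agree_step γ ω t k ?_
      intro s hs
      rw [H s k]
      exact ih s (by omega) k
  exact fun t k => key (t.val + 1) t (Nat.lt_succ_self _) k

/-- every strategy profile is equivalent to one in which each
agent's prescription depends only on the shared data and the agent's own
recent observations (not on its own past controls). -/
theorem strategies_without_own_control_recall
    (n T K : ℕ) [NeZero n] (hT1 : 1 ≤ T) (hTn : T ≤ n) (hK : 2 ≤ K)
    (X : Type) [Fintype X] [Nonempty X]
    (Y U : Fin K → Type) [∀ j, Fintype (Y j)] [∀ j, Nonempty (Y j)]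
    [∀ j, Fintype (U j)] [∀ j, Nonempty (U j)]
    (M : Model n K X Y U)
    (γ : Profile n T Y U)
    (ℓ : Fin n → X → ((j : Fin K) → U j) → ℝ) :
    ∃ γb : Profile n T Y U,
      -- `γb` depends only on `(Δ_t^{(K)}, Y_{t-T+1:t}^k)`
      (∀ (k : Fin K) (t : Fin n) (i1 i2 : Info n T Y U t k),
        i1.1 = i2.1 → i1.2.1 = i2.2.1 → γb k t i1 = γb k t i2) ∧
      -- almost surely `γb` prescribes the same actions as `γ`
      (∀ ω : Traj n K X Y U, 0 < prob M T γ ω →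
        ∀ (t : Fin n) (k : Fin K),
          γb k t (infoOf T ω t k) = γ k t (infoOf T ω t k)) ∧
      -- hence the same trajectory measure and the same payoff
      (∀ ω : Traj n K X Y U, prob M T γb ω = prob M T γ ω) ∧
      payoff M γb ℓ = payoff M γ ℓ := by
  refine ⟨barProfile γ, ?_, ?_, ?_, ?_⟩
  · intro k t i1 i2 h1 h2
    show γ k t (i1.1, (i1.2.1, fun s => reconU γ t k i1.1 i1.2.1 s.1 s.2.2))
        = γ k t (i2.1, (i2.2.1, fun s => reconU γ t k i2.1 i2.2.1 s.1 s.2.2))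
    rw [h1, h2]
  · intro ω hpos t k
    have hall : ∀ (s : Fin n) (j : Fin K), ω.2.2 s j = γ j s (infoOf T ω s j) := by
      by_contra h
      push_neg at h
      obtain ⟨s, j, hne⟩ := h
      have hz : (∏ t : Fin n, ∏ j : Fin K,
          (if ω.2.2 t j = γ j t (infoOf T ω t j) then (1 : ℝ) else 0)) = 0 :=
        Finset.prod_eq_zero (Finset.mem_univ s)
          (Finset.prod_eq_zero (Finset.mem_univ j)
            (show (if ω.2.2 s j = γ j s (infoOf T ω s j)
                then (1:ℝ) else 0) = 0 from if_neg hne))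
      unfold prob at hpos
      rw [hz, mul_zero] at hpos
      exact lt_irrefl 0 hpos
    exact barProfile_agree_of_gamma γ ω hall t k
  · intro ω
    unfold prob
    congr 1
    by_cases h : ∀ (t : Fin n) (j : Fin K), ω.2.2 t j = γ j t (infoOf T ω t j)
    · have hb : ∀ (t : Fin n) (j : Fin K),
          ω.2.2 t j = barProfile γ j t (infoOf T ω t j) := by
        intro t j
        rw [barProfile_agree_of_gamma γ ω h t j]
        exact h t j
      rw [Finset.prod_eq_one (fun t _ => Finset.prod_eq_one (fun j _ => if_pos (hb t j))),
          Finset.prod_eq_one (fun t _ => Finset.prod_eq_one (fun j _ => if_pos (h t j)))]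
    · push_neg at h
      obtain ⟨t, j, hne⟩ := h
      by_cases hb : ∀ (t : Fin n) (j : Fin K),
          ω.2.2 t j = barProfile γ j t (infoOf T ω t j)
      · exfalso
        exact hne ((hb t j).trans (barProfile_agree_of_bar γ ω hb t j))
      · push_neg at hb
        obtain ⟨t', j', hne'⟩ := hb
        rw [Finset.prod_eq_zero (Finset.mem_univ t')
              (Finset.prod_eq_zero (Finset.mem_univ j')
                (show (if ω.2.2 t' j' = barProfile γ j' t' (infoOf T ω t' j')
                    then (1:ℝ) else 0) = 0 from if_neg hne')),
            Finset.prod_eq_zero (Finset.mem_univ t)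
              (Finset.prod_eq_zero (Finset.mem_univ j)
                (show (if ω.2.2 t j = γ j t (infoOf T ω t j)
                    then (1:ℝ) else 0) = 0 from if_neg hne))]
  · unfold payoff expec
    refine Finset.sum_congr rfl fun ω _ => ?_
    congr 1
    -- reuse the previous part
    unfold prob
    congr 1
    by_cases h : ∀ (t : Fin n) (j : Fin K), ω.2.2 t j = γ j t (infoOf T ω t j)
    · have hb : ∀ (t : Fin n) (j : Fin K),
          ω.2.2 t j = barProfile γ j t (infoOf T ω t j) := by
        intro t j
        rw [barProfile_agree_of_gamma γ ω h t j]
        exact h t j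
      rw [Finset.prod_eq_one (fun t _ => Finset.prod_eq_one (fun j _ => if_pos (hb t j))),
          Finset.prod_eq_one (fun t _ => Finset.prod_eq_one (fun j _ => if_pos (h t j)))]
    · push_neg at h
      obtain ⟨t, j, hne⟩ := h
      by_cases hb : ∀ (t : Fin n) (j : Fin K),
          ω.2.2 t j = barProfile γ j t (infoOf T ω t j)
      · exfalso
        exact hne ((hb t j).trans (barProfile_agree_of_bar γ ω hb t j))
      · push_neg at hb
        obtain ⟨t', j', hne'⟩ := hb
        rw [Finset.prod_eq_zero (Finset.mem_univ t')
              (Finset.prod_eq_zero (Finset.mem_univ j')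
                (show (if ω.2.2 t' j' = barProfile γ j' t' (infoOf T ω t' j')
                    then (1:ℝ) else 0) = 0 from if_neg hne')),
            Finset.prod_eq_zero (Finset.mem_univ t)
              (Finset.prod_eq_zero (Finset.mem_univ j)
                (show (if ω.2.2 t j = γ j t (infoOf T ω t j)
                    then (1:ℝ) else 0) = 0 from if_neg hne))]
end
end
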